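/- arXiv:1404.0169 — 3 statements merged into one kernel-verified Lean document; each statement's English description precedes it below -/
import Mathlib

section
/- For the sequence n_k of vertices of G_k satisfying n_1 = 1 and n_k = (1 + p) * n_{k-1} + p^2 with p = 2^(2^(k-2)-1), one has n_k ≤ k * 2^(2^(k-1)-1) for all k ≥ 1. -/
theorem vertex_count_bound (n : ℕ → ℕ) (h1 : n 1 = 1)
    (hrec : ∀ k, 2 ≤ k →
      n k = (1 + 2 ^ (2 ^ (k - 2) - 1)) * n (k - 1) + (2 ^ (2 ^ (k - 2) - 1)) ^ 2) :
    ∀ k, 1 ≤ k → n k ≤ k * 2 ^ (2 ^ (k - 1) - 1) := by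
  intro k hk
  induction k, hk using Nat.le_induction with
  | base => simpa using h1.le
  | succ k hk ih =>
    have hrec' := hrec (k + 1) (by omega)
    have hk2 : k + 1 - 2 = k - 1 := by omega
    rw [hk2, Nat.add_sub_cancel] at hrec'
    set p := 2 ^ (2 ^ (k - 1) - 1) with hpdef
    have hp : 1 ≤ p := Nat.one_le_two_pow
    have key : 2 ^ (2 ^ (k + 1 - 1) - 1) = 2 * p ^ 2 := by
      rw [hpdef, ← pow_mul, ← pow_succ']
      congr 1
      have h2 : 1 ≤ 2 ^ (k - 1) := Nat.one_le_two_pow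
      have h3 : 2 ^ (k + 1 - 1) = 2 * 2 ^ (k - 1) := by
        rw [Nat.add_sub_cancel]
        conv_lhs => rw [show k = (k - 1) + 1 by omega]
        ring
      omega
    rw [key]
    calc n (k + 1) = (1 + p) * n k + p ^ 2 := hrec'
      _ ≤ (1 + p) * (k * p) + p ^ 2 := by
          have := ih
          gcongr
      _ ≤ (k + 1) * (2 * p ^ 2) := by nlinarith [Nat.one_le_iff_ne_zero.mp hp, sq_nonneg p]
end

section
/- For n_k ≤ (k+3)/2 * 2^(2^(k-1)-1) (the size of the replicated construction) and independence number α_k ≤ 2^(2^(k-1)-1), we have α_k = O(n_k / log log n_k); formally: there is a constant C such that for all k ≥ 2, 2^(2^(k-1)-1) ≤ C * n_k / Nat.log 2 (Nat.log 2 n_k) where n_k = (k+3) * 2^(2^(k-1)-2) (take k ≥ 3 so quantities are integers). -/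
/-!
Write `m = 2 ^ (k - 1) - 2` and `n = (k + 3) * 2 ^ m`. Since `4 ≤ n < 2 ^ 2 ^ k`, the iterated
logarithm `⌊log₂ ⌊log₂ n⌋⌋` lies between `1` and `k`, so
`2 ^ (m + 1) * ⌊log₂ ⌊log₂ n⌋⌋ ≤ 2 * (k + 3) * 2 ^ m = 2 * n`, and `C = 2` works.
-/

namespace Nat

theorem log_log_lt_of_lt_pow_pow {b n k : ℕ} (hb : b ≠ 0) (hk : k ≠ 0) (h : n < b ^ b ^ k) :
    log b (log b n) < k :=
  log_lt_of_lt_pow' hk (log_lt_of_lt_pow' (pow_ne_zero k hb) h)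

theorem le_log_log_of_pow_pow_le {b n k : ℕ} (hb : 1 < b) (h : b ^ b ^ k ≤ n) :
    k ≤ log b (log b n) :=
  le_log_of_pow_le hb (le_log_of_pow_le hb h)

theorem add_three_mul_two_pow_lt_two_pow_two_pow {k : ℕ} (hk : 2 ≤ k) :
    (k + 3) * 2 ^ (2 ^ (k - 1) - 2) < 2 ^ 2 ^ k := by
  obtain ⟨j, rfl⟩ : ∃ j, k = j + 1 := ⟨k - 1, by omega⟩
  have hj : j < 2 ^ j := j.lt_two_pow_self
  have hsplit : 2 ^ 2 ^ (j + 1) = 2 ^ (2 ^ j - 2) * 2 ^ (2 ^ j + 2) := by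
    rw [← pow_add, pow_succ]
    congr 1
    omega
  have hfactor : j + 4 < 2 ^ (2 ^ j + 2) :=
    calc j + 4 < 2 ^ j * 2 ^ 2 := by omega
      _ ≤ 2 ^ (2 ^ j + 2) := by
        rw [← pow_add]
        exact pow_le_pow_right₀ one_le_two (by omega)
  rw [hsplit, mul_comm]
  exact Nat.mul_lt_mul_of_pos_left hfactor (by positivity)

end Nat

theorem alpha_loglog_bound :
    ∃ C : ℝ, 0 < C ∧ ∀ k : ℕ, 2 ≤ k →
      (2 ^ (2 ^ (k - 1) - 1) : ℝ) ≤
        C * ((k + 3) * 2 ^ (2 ^ (k - 1) - 2) : ℕ) /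
          (Nat.log 2 (Nat.log 2 ((k + 3) * 2 ^ (2 ^ (k - 1) - 2))) : ℝ) := by
  refine ⟨2, two_pos, fun k hk => ?_⟩
  set m := 2 ^ (k - 1) - 2
  have hm : 2 ^ (k - 1) - 1 = m + 1 := by
    have : 2 ≤ 2 ^ (k - 1) := Nat.le_self_pow (by omega) 2
    omega
  set L := Nat.log 2 (Nat.log 2 ((k + 3) * 2 ^ m))
  have hL_le : L ≤ k :=
    (Nat.log_log_lt_of_lt_pow_pow two_ne_zero (by omega)
      (Nat.add_three_mul_two_pow_lt_two_pow_two_pow hk)).le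
  have hL_pos : 1 ≤ L :=
    Nat.le_log_log_of_pow_pow_le one_lt_two
      (calc 2 ^ 2 ^ 1 ≤ (k + 3) * 1 := by omega
        _ ≤ (k + 3) * 2 ^ m := Nat.mul_le_mul_left _ Nat.one_le_two_pow)
  rw [hm, le_div_iff₀ (by exact_mod_cast hL_pos)]
  have hL_le' : (L : ℝ) ≤ k + 3 := by exact_mod_cast hL_le.trans (by omega)
  push_cast
  calc (2 : ℝ) ^ (m + 1) * L ≤ 2 ^ (m + 1) * (k + 3) := by gcongr
    _ = 2 * ((k + 3) * 2 ^ m) := by ring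
end

section
/- For the improved graph G̃_k: if every independent set I of G_k satisfies w_k(I) ≤ |{P ∈ 𝒫_k : P ∩ I ≠ ∅}|, then every independent set Ĩ of G̃_k (obtained by adding a weight-1 diagonal d_P adjacent to all of P for each probe P) satisfies w̃_k(Ĩ) ≤ |𝒫_k|. Abstractly: let G be a graph, 𝒫 a family of independent sets, w a weight function with w(I) ≤ |{P ∈ 𝒫 : P ∩ I ≠ ∅}| for all independent I; let G' add a diagonal d_P of weight 1 for each P ∈ 𝒫. Then every independent set I' of G' has total weight at most |𝒫|. -/
/-!
Split an independent set `I'` of the extended graph into its vertex part `I` and its set of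
diagonals. The vertex part is independent in `G`, so its weight is at most the number of probes
meeting `I`; a diagonal `d_P` is adjacent to every vertex of `P`, so each diagonal in `I'` comes
from a probe missing `I`. The two counts add up to `|𝒫|`.
-/

open Finset

theorem Finset.card_le_card_filter_of_forall_subtype {α : Type*} {s : Finset α} {p : α → Prop}
    [DecidablePred p] (D : Finset {a // a ∈ s}) (hD : ∀ a ∈ D, p a.1) :
    #D ≤ #(s.filter p) :=
  card_le_card_of_injOn Subtype.val (fun a ha => mem_filter.mpr ⟨a.2, hD a ha⟩)
    Subtype.val_injective.injOn

theorem improved_weight_bound_general {V : Type*} [DecidableEq V]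
    (G : SimpleGraph V) (Ps : Finset (Finset V))
    (w : V → ℕ)
    (hw : ∀ I : Finset V, (∀ u ∈ I, ∀ v ∈ I, ¬ G.Adj u v) →
      ∑ v ∈ I, w v ≤ (Ps.filter (fun P => (P ∩ I).Nonempty)).card)
    (G' : SimpleGraph (V ⊕ {P // P ∈ Ps}))
    (hVV : ∀ u v : V, G'.Adj (Sum.inl u) (Sum.inl v) ↔ G.Adj u v)
    (hVD : ∀ (u : V) (P : {P // P ∈ Ps}),
      G'.Adj (Sum.inl u) (Sum.inr P) ↔ u ∈ P.1)
    (w' : V ⊕ {P // P ∈ Ps} → ℕ)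
    (hw'V : ∀ v : V, w' (Sum.inl v) = w v)
    (hw'D : ∀ P : {P // P ∈ Ps}, w' (Sum.inr P) = 1) :
    ∀ I' : Finset (V ⊕ {P // P ∈ Ps}),
      (∀ a ∈ I', ∀ b ∈ I', ¬ G'.Adj a b) →
      ∑ x ∈ I', w' x ≤ Ps.card := by
  intro I' hI'
  set I := I'.toLeft
  have hI : ∀ u ∈ I, ∀ v ∈ I, ¬ G.Adj u v := fun u hu v hv =>
    (hVV u v).not.mp (hI' _ (mem_toLeft.mp hu) _ (mem_toLeft.mp hv))
  have hmiss : ∀ P ∈ I'.toRight, ¬ (P.1 ∩ I).Nonempty := by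
    rintro P hP ⟨u, hu⟩
    rw [mem_inter] at hu
    exact hI' _ (mem_toLeft.mp hu.2) _ (mem_toRight.mp hP) ((hVD u P).mpr hu.1)
  calc ∑ x ∈ I', w' x = ∑ v ∈ I, w v + #I'.toRight := by
        simp only [sum_sum_eq_sum_toLeft_add_sum_toRight, hw'V, hw'D, card_eq_sum_ones, I]
    _ ≤ #(Ps.filter fun P => (P ∩ I).Nonempty) + #(Ps.filter fun P => ¬ (P ∩ I).Nonempty) :=
        Nat.add_le_add (hw I hI) (card_le_card_filter_of_forall_subtype _ hmiss)
    _ = #Ps := card_filter_add_card_filter_not _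

theorem improved_weight_bound {V : Type*} [DecidableEq V]
    (G : SimpleGraph V) (Ps : Finset (Finset V))
    (hPindep : ∀ P ∈ Ps, ∀ u ∈ P, ∀ v ∈ P, ¬ G.Adj u v)
    (w : V → ℕ)
    (hw : ∀ I : Finset V, (∀ u ∈ I, ∀ v ∈ I, ¬ G.Adj u v) →
      ∑ v ∈ I, w v ≤ (Ps.filter (fun P => (P ∩ I).Nonempty)).card)
    (G' : SimpleGraph (V ⊕ {P // P ∈ Ps}))
    (hVV : ∀ u v : V, G'.Adj (Sum.inl u) (Sum.inl v) ↔ G.Adj u v)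
    (hVD : ∀ (u : V) (P : {P // P ∈ Ps}),
      G'.Adj (Sum.inl u) (Sum.inr P) ↔ u ∈ P.1)
    (hDD : ∀ P P' : {P // P ∈ Ps}, ¬ G'.Adj (Sum.inr P) (Sum.inr P'))
    (w' : V ⊕ {P // P ∈ Ps} → ℕ)
    (hw'V : ∀ v : V, w' (Sum.inl v) = w v)
    (hw'D : ∀ P : {P // P ∈ Ps}, w' (Sum.inr P) = 1) :
    ∀ I' : Finset (V ⊕ {P // P ∈ Ps}),
      (∀ a ∈ I', ∀ b ∈ I', ¬ G'.Adj a b) →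
      ∑ x ∈ I', w' x ≤ Ps.card :=
  improved_weight_bound_general G Ps w hw G' hVV hVD w' hw'V hw'D
end
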